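/- Let ε > 0, k ∈ ℕ, r_max ≥ 0, and 0 ≤ r ≤ r_max. Let Z = ScalarDP(r, ε; k, r_max). Then E[Z] = r and E[(Z − r)²] ≤ ((k+1)/(e^ε − 1))·[r² + r_max²/(4k²) + (2k+1)(e^ε + k) r_max²/(6k(e^ε − 1))] + r_max²/(4k²). -/

import Mathlib

open MeasureTheory Real Classical
open scoped ENNReal

/-- The distribution of the output `Z` of the mechanism `ScalarDP(r, ε; k, r_max)`:
randomized rounding of `k·min{r,r_max}/r_max` to `J ∈ {⌊·⌋, ⌈·⌉}`, `(k+1)`-ary randomized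
response `Ĵ`, and the debiased output `Z = a(Ĵ - b)` with
`a = ((e^ε+k)/(e^ε-1))·(r_max/k)` and `b = k(k+1)/(2(e^ε+k))`. -/
noncomputable def scalarDP (r ε : ℝ) (k : ℕ) (rmax : ℝ) : Measure ℝ :=
  let r' := min r rmax
  let c := k * r' / rmax
  let μJ : Measure ℝ :=
    ENNReal.ofReal ((⌈c⌉ : ℝ) - c) • Measure.dirac ((⌊c⌋ : ℤ) : ℝ)
      + ENNReal.ofReal (1 - ((⌈c⌉ : ℝ) - c)) • Measure.dirac ((⌈c⌉ : ℤ) : ℝ)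
  let rr : ℝ → Measure ℝ := fun i =>
    ENNReal.ofReal (Real.exp ε / (Real.exp ε + k)) • Measure.dirac i
      + ENNReal.ofReal (1 / (Real.exp ε + k)) •
          ∑ j ∈ Finset.range (k + 1),
            (if (j : ℝ) = i then 0 else Measure.dirac ((j : ℕ) : ℝ))
  let a := (Real.exp ε + k) / (Real.exp ε - 1) * (rmax / k)
  let b := k * (k + 1) / (2 * (Real.exp ε + k))
  μJ.bind fun i => (rr i).map fun x => a * (x - b)

/-!
Write `β = e^ε`, `c = k r / r_max` and `q = (β - 1)/(β + k)`. The reported index `Ĵ` equals the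
rounded index `J` with probability `q` and is uniform on `{0, …, k}` otherwise, so
`𝔼[Ĵ] = q c + (1 - q) k / 2`, and the affine debiasing `a (· - b)` sends this mean to `r`.
Hence the mean squared error is `a² Var Ĵ`, and the law of total variance gives
`Var Ĵ = q (1 - q) (c - k/2)² + q p (1 - p) + (1 - q) k (k + 2) / 12`, where `p = ⌈c⌉ - c` is
the probability of rounding down and `p (1 - p) ≤ 1/4` is the variance of the rounding. The claimed bound exceeds `a² Var Ĵ` by a sum of nonnegative
terms.
-/

namespace MeasureTheory.Measure

variable {α β : Type*} [MeasurableSpace α] [MeasurableSpace β] [MeasurableSingletonClass α]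

theorem smul_dirac_add_smul_dirac_bind (c₁ c₂ : ℝ≥0∞) (x y : α) (F : α → Measure β) :
    (c₁ • dirac x + c₂ • dirac y).bind F = c₁ • F x + c₂ • F y := by
  ext s hs
  rw [bind_apply hs (aemeasurable_dirac.smul_measure c₁ |>.add_measure
      (aemeasurable_dirac.smul_measure c₂)),
    lintegral_add_measure, lintegral_smul_measure, lintegral_smul_measure, lintegral_dirac,
    lintegral_dirac]
  rfl

end MeasureTheory.Measure

namespace ScalarDP

open Finset

noncomputable def roundingLaw (c : ℝ) : Measure ℝ :=
  ENNReal.ofReal ((⌈c⌉ : ℝ) - c) • Measure.dirac ((⌊c⌋ : ℤ) : ℝ)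
    + ENNReal.ofReal (1 - ((⌈c⌉ : ℝ) - c)) • Measure.dirac ((⌈c⌉ : ℤ) : ℝ)

noncomputable def randomizedResponse (β : ℝ) (k : ℕ) (i : ℝ) : Measure ℝ :=
  ENNReal.ofReal (β / (β + k)) • Measure.dirac i
    + ENNReal.ofReal (1 / (β + k)) •
        ∑ j ∈ range (k + 1), (if (j : ℝ) = i then 0 else Measure.dirac ((j : ℕ) : ℝ))

noncomputable def mixWeight (β : ℝ) (k : ℕ) : ℝ := (β - 1) / (β + k)

noncomputable def debiasScale (β : ℝ) (k : ℕ) (rmax : ℝ) : ℝ := (β + k) / (β - 1) * (rmax / k)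

noncomputable def debiasShift (β : ℝ) (k : ℕ) : ℝ := k * (k + 1) / (2 * (β + k))

theorem scalarDP_eq_bind (r ε : ℝ) (k : ℕ) (rmax : ℝ) :
    scalarDP r ε k rmax = (roundingLaw (k * min r rmax / rmax)).bind fun i =>
      (randomizedResponse (exp ε) k i).map fun x =>
        debiasScale (exp ε) k rmax * (x - debiasShift (exp ε) k) :=
  rfl

/-- `𝔼[h(Ĵ)]` for `Ĵ` equal to the randomized rounding of `c` with probability `q` and uniform
on `{0, …, k}` otherwise. -/
noncomputable def responseExpectation (q c : ℝ) (k : ℕ) (h : ℝ → ℝ) : ℝ :=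
  q * (((⌈c⌉ : ℝ) - c) * h ⌊c⌋ + (1 - ((⌈c⌉ : ℝ) - c)) * h ⌈c⌉)
    + (1 - q) * ((∑ j ∈ range (k + 1), h j) / (k + 1))

section Rounding

variable (c : ℝ)

theorem ceil_sub_self_nonneg : 0 ≤ (⌈c⌉ : ℝ) - c := sub_nonneg.2 (Int.le_ceil c)

theorem one_sub_ceil_sub_self_nonneg : 0 ≤ 1 - ((⌈c⌉ : ℝ) - c) := by
  linarith [Int.ceil_lt_add_one c]

theorem ceil_eq_self_and_floor_eq_self_or_ceil_eq_floor_add_one :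
    ((⌈c⌉ : ℝ) = c ∧ (⌊c⌋ : ℝ) = c) ∨ (⌈c⌉ : ℝ) = ⌊c⌋ + 1 := by
  by_cases hc : c ∈ Set.range Int.cast
  · exact .inl ⟨(Int.ceil_eq_self_iff_mem c).2 hc, (Int.floor_eq_self_iff_mem c).2 hc⟩
  · exact .inr (by exact_mod_cast (Int.ceil_eq_floor_add_one_iff_notMem c).2 hc)

theorem ceil_sub_mul_floor_add_mul_ceil :
    ((⌈c⌉ : ℝ) - c) * ⌊c⌋ + (1 - ((⌈c⌉ : ℝ) - c)) * ⌈c⌉ = c := by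
  rcases ceil_eq_self_and_floor_eq_self_or_ceil_eq_floor_add_one c with ⟨hce, -⟩ | h
  · rw [hce]; ring
  · rw [h]; ring

theorem ceil_sub_mul_floor_sub_sq_add_mul_ceil_sub_sq (t : ℝ) :
    ((⌈c⌉ : ℝ) - c) * (⌊c⌋ - t) ^ 2 + (1 - ((⌈c⌉ : ℝ) - c)) * (⌈c⌉ - t) ^ 2
      = (c - t) ^ 2 + ((⌈c⌉ : ℝ) - c) * (1 - ((⌈c⌉ : ℝ) - c)) := by
  rcases ceil_eq_self_and_floor_eq_self_or_ceil_eq_floor_add_one c with ⟨hce, hfl⟩ | h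
  · rw [hce, hfl]; ring
  · rw [h]; ring

theorem ceil_sub_self_mul_one_sub_le :
    ((⌈c⌉ : ℝ) - c) * (1 - ((⌈c⌉ : ℝ) - c)) ≤ 1 / 4 := by
  nlinarith [sq_nonneg ((⌈c⌉ : ℝ) - c - 1 / 2)]

end Rounding

theorem sum_range_succ_natCast_sub_div (k : ℕ) (t : ℝ) :
    (∑ j ∈ range (k + 1), ((j : ℝ) - t)) / (k + 1) = k / 2 - t := by
  rw [div_eq_iff (by positivity)]
  induction k with
  | zero => simp
  | succ n ih => rw [sum_range_succ, ih]; push_cast; ring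

theorem sum_range_succ_natCast_sub_sq_div (k : ℕ) (t : ℝ) :
    (∑ j ∈ range (k + 1), ((j : ℝ) - t) ^ 2) / (k + 1) = (k / 2 - t) ^ 2 + k * (k + 2) / 12 := by
  rw [div_eq_iff (by positivity)]
  induction k with
  | zero => simp
  | succ n ih => rw [sum_range_succ, ih]; push_cast; ring

section ResponseExpectation

variable (q c : ℝ) (k : ℕ)

theorem responseExpectation_mul_sub (α t : ℝ) :
    responseExpectation q c k (fun y => α * (y - t)) = α * (q * c + (1 - q) * k / 2 - t) := by
  rw [responseExpectation, ← mul_sum, mul_div_assoc, sum_range_succ_natCast_sub_div]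
  linear_combination q * α * ceil_sub_mul_floor_add_mul_ceil c

theorem responseExpectation_mul_sub_mean_sq (α : ℝ) :
    responseExpectation q c k (fun y => (α * (y - (q * c + (1 - q) * k / 2))) ^ 2)
      = α ^ 2 * (q * (1 - q) * (c - k / 2) ^ 2 + q * (((⌈c⌉ : ℝ) - c) * (1 - ((⌈c⌉ : ℝ) - c)))
          + (1 - q) * (k * (k + 2) / 12)) := by
  simp_rw [responseExpectation, mul_pow, ← mul_sum, mul_div_assoc,
    sum_range_succ_natCast_sub_sq_div]
  linear_combination q * α ^ 2 * ceil_sub_mul_floor_sub_sq_add_mul_ceil_sub_sq c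
    (q * c + (1 - q) * k / 2)

end ResponseExpectation

theorem integrable_ite_dirac (i : ℝ) (g : ℝ → ℝ) (j : ℕ) :
    Integrable g (if (j : ℝ) = i then 0 else Measure.dirac (j : ℝ)) := by
  split_ifs
  exacts [integrable_zero_measure, integrable_dirac (by simp)]

theorem integrable_randomizedResponse (β : ℝ) (k : ℕ) (i : ℝ) (g : ℝ → ℝ) :
    Integrable g (randomizedResponse β k i) :=
  ((integrable_dirac (by simp)).smul_measure ENNReal.ofReal_ne_top).add_measure
    ((integrable_finsetSum_measure.2 fun j _ => integrable_ite_dirac i g j).smul_measure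
      ENNReal.ofReal_ne_top)

theorem integral_randomizedResponse {β : ℝ} {k : ℕ} (hβ : 0 ≤ β) (g : ℝ → ℝ) {m : ℕ}
    (hm : m ≤ k) :
    ∫ x, g x ∂randomizedResponse β k m
      = (β - 1) / (β + k) * g m + 1 / (β + k) * ∑ j ∈ range (k + 1), g j := by
  have hsum : ∑ j ∈ range (k + 1), ∫ x, g x ∂(if (j : ℝ) = m then 0 else Measure.dirac (j : ℝ))
      = ∑ j ∈ range (k + 1), g j - g m := by
    simp_rw [Nat.cast_inj, apply_ite (fun μ => ∫ x, g x ∂μ), integral_zero_measure,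
      integral_dirac]
    rw [← sum_erase_eq_sub (mem_range_succ_iff.2 hm), ← filter_ne', sum_filter]
    exact sum_congr rfl fun j _ => by split_ifs <;> simp_all
  obtain ⟨hdirac, hrest⟩ := integrable_add_measure.1 (integrable_randomizedResponse β k m g)
  rw [randomizedResponse, integral_add_measure hdirac hrest, integral_smul_measure,
    integral_smul_measure, integral_dirac,
    integral_finsetSum_measure fun j _ => integrable_ite_dirac _ g j, hsum,
    ENNReal.toReal_ofReal (by positivity), ENNReal.toReal_ofReal (by positivity)]
  simp only [smul_eq_mul]
  ring

theorem integral_roundingLaw_bind_map_randomizedResponse {β c : ℝ} {k : ℕ} (hβ : 0 < β)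
    (hc₀ : 0 ≤ c) (hck : c ≤ k) {φ : ℝ → ℝ} (hφ : Measurable φ) {g : ℝ → ℝ}
    (hg : Measurable g) :
    ∫ x, g x ∂(roundingLaw c).bind (fun i => (randomizedResponse β k i).map φ)
      = responseExpectation (mixWeight β k) c k (fun y => g (φ y)) := by
  have hint (i : ℝ) : Integrable g ((randomizedResponse β k i).map φ) :=
    (integrable_map_measure hg.aestronglyMeasurable hφ.aemeasurable).2
      (integrable_randomizedResponse β k i _)
  have huniform : (1 - (β - 1) / (β + k)) / (k + 1) = 1 / (β + k) := by field_simp; ring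
  rw [responseExpectation, mixWeight, roundingLaw, Measure.smul_dirac_add_smul_dirac_bind,
    integral_add_measure ((hint _).smul_measure ENNReal.ofReal_ne_top)
      ((hint _).smul_measure ENNReal.ofReal_ne_top),
    integral_smul_measure, integral_smul_measure,
    ENNReal.toReal_ofReal (ceil_sub_self_nonneg c),
    ENNReal.toReal_ofReal (one_sub_ceil_sub_self_nonneg c),
    integral_map hφ.aemeasurable hg.aestronglyMeasurable,
    integral_map hφ.aemeasurable hg.aestronglyMeasurable,
    ← natCast_floor_eq_intCast_floor hc₀, ← natCast_ceil_eq_intCast_ceil hc₀,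
    integral_randomizedResponse hβ.le _ (Nat.floor_le_of_le hck),
    integral_randomizedResponse hβ.le _ (Nat.ceil_le.2 hck), ← mul_div_assoc,
    mul_div_right_comm, huniform]
  simp only [smul_eq_mul]
  ring

variable {β rmax : ℝ} {k : ℕ}

theorem integral_scalarDP {ε r : ℝ} (hr0 : 0 ≤ r) (hr : r ≤ rmax) {g : ℝ → ℝ}
    (hg : Measurable g) :
    ∫ x, g x ∂scalarDP r ε k rmax
      = responseExpectation (mixWeight (exp ε) k) (k * r / rmax) k
          (fun y => g (debiasScale (exp ε) k rmax * (y - debiasShift (exp ε) k))) := by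
  have hrmax : 0 ≤ rmax := hr0.trans hr
  rw [scalarDP_eq_bind, min_eq_left hr]
  exact integral_roundingLaw_bind_map_randomizedResponse (exp_pos ε) (by positivity)
    (div_le_of_le_mul₀ hrmax k.cast_nonneg (by gcongr)) (by fun_prop) hg

theorem debiasScale_mul_mean_sub_debiasShift (hβ : 1 < β) (hk : 0 < k) (c : ℝ) :
    debiasScale β k rmax * (mixWeight β k * c + (1 - mixWeight β k) * k / 2 - debiasShift β k)
      = rmax / k * c := by
  have : β - 1 ≠ 0 := by linarith
  rw [debiasScale, mixWeight, debiasShift]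
  field_simp
  ring

theorem debiasScale_sq_mul_le (hβ : 1 < β) (hk : 0 < k) {c V : ℝ} (hc : 0 ≤ c)
    (hV : V ≤ 1 / 4) :
    debiasScale β k rmax ^ 2
        * (mixWeight β k * (1 - mixWeight β k) * (c - k / 2) ^ 2 + mixWeight β k * V
          + (1 - mixWeight β k) * (k * (k + 2) / 12))
      ≤ ((k : ℝ) + 1) / (β - 1)
            * ((rmax / k * c) ^ 2 + rmax ^ 2 / (4 * (k : ℝ) ^ 2)
                + (2 * (k : ℝ) + 1) * (β + k) * rmax ^ 2 / (6 * (k : ℝ) * (β - 1)))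
          + rmax ^ 2 / (4 * (k : ℝ) ^ 2) := by
  have hβ' : 0 < β - 1 := by linarith
  have hk' : (0 : ℝ) < k := by exact_mod_cast hk
  have hslack : ((k : ℝ) + 1) / (β - 1)
            * ((rmax / k * c) ^ 2 + rmax ^ 2 / (4 * (k : ℝ) ^ 2)
                + (2 * (k : ℝ) + 1) * (β + k) * rmax ^ 2 / (6 * (k : ℝ) * (β - 1)))
          + rmax ^ 2 / (4 * (k : ℝ) ^ 2)
        - debiasScale β k rmax ^ 2
          * (mixWeight β k * (1 - mixWeight β k) * (c - k / 2) ^ 2 + mixWeight β k * V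
            + (1 - mixWeight β k) * (k * (k + 2) / 12))
        = (k + 1) / (β - 1) * (rmax ^ 2 / k * c) + (β + k) / (β - 1) * (rmax / k) ^ 2 * (1 / 4 - V)
          + ((k + 1) * rmax / (2 * (β - 1))) ^ 2 := by
    rw [debiasScale, mixWeight]
    field_simp
    ring
  have : 0 ≤ 1 / 4 - V := by linarith
  rw [← sub_nonneg, hslack]
  positivity

end ScalarDP

open ScalarDP in
/-- `ScalarDP` is unbiased, `E[Z] = r`, with the stated mean-squared-error
bound. -/
theorem scalarDP_mean_and_mse (ε : ℝ) (hε : 0 < ε) (k : ℕ) (hk : 0 < k)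
    (rmax r : ℝ) (hr0 : 0 ≤ r) (hr : r ≤ rmax) :
    (∫ x, x ∂(scalarDP r ε k rmax)) = r ∧
      (∫ x, (x - r) ^ 2 ∂(scalarDP r ε k rmax))
        ≤ ((k : ℝ) + 1) / (Real.exp ε - 1)
            * (r ^ 2 + rmax ^ 2 / (4 * (k : ℝ) ^ 2)
                + (2 * (k : ℝ) + 1) * (Real.exp ε + k) * rmax ^ 2
                    / (6 * (k : ℝ) * (Real.exp ε - 1)))
          + rmax ^ 2 / (4 * (k : ℝ) ^ 2) := by
  have hβ : 1 < exp ε := one_lt_exp_iff.2 hε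
  have hc₀ : 0 ≤ (k : ℝ) * r / rmax := by have := hr0.trans hr; positivity
  have hrc : rmax / k * (k * r / rmax) = r := by
    rcases hr0.eq_or_lt with rfl | hpos
    · simp
    · field_simp [(hpos.trans_le hr).ne']
  rw [integral_scalarDP hr0 hr (g := fun x => x) measurable_id,
    integral_scalarDP hr0 hr (by fun_prop)]
  generalize (k : ℝ) * r / rmax = c at hc₀ hrc ⊢
  subst hrc
  have hmean := debiasScale_mul_mean_sub_debiasShift (rmax := rmax) hβ hk c
  refine ⟨(responseExpectation_mul_sub _ c k _ _).trans hmean, ?_⟩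
  have hcentered : (fun y => (debiasScale (exp ε) k rmax * (y - debiasShift (exp ε) k)
      - rmax / k * c) ^ 2) = fun y => (debiasScale (exp ε) k rmax * (y - (mixWeight (exp ε) k * c
        + (1 - mixWeight (exp ε) k) * k / 2))) ^ 2 := by
    ext y; rw [← hmean]; ring
  rw [hcentered, responseExpectation_mul_sub_mean_sq]
  exact debiasScale_sq_mul_le hβ hk hc₀ (ceil_sub_self_mul_one_sub_le c)
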